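/- arXiv:2105.14200 — 2 statements merged into one kernel-verified Lean document; each statement's English description precedes it below -/
import Mathlib

section
/- Let p be a real number of the form p = 2i/(2j+1) with i, j positive integers and p > 2. Let x ∈ L^p(0, ∞) be real-valued and set y(s) = (1/s)·∫_0^s x for s > 0. Then ∫_0^∞ |y(s) - x(s)|^p ds ≤ (1/m_p) · ∫_0^∞ |x(s)|^p ds. -/
open MeasureTheory

/-- `m_p`: the minimum value of `f_p(t) = p t^(p-1) + (1-t)^p - t^p` on `[0, 1/2]`. -/
noncomputable def mVal (p : ℝ) : ℝ :=
  sInf ((fun t : ℝ => p * t ^ (p - 1) + (1 - t) ^ p - t ^ p) '' Set.Icc 0 (1 / 2))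

/-!
By homogeneity and a study of `f_p`, all real `a`, `b` satisfy
`|a|^p + p |a|^(p-2) a b + m_p |b|^p ≤ |a + b|^p`. Take `a = y s` and `b = x s - y s`: since
`s y'(s) = x s - y s`, the first two terms are the derivative of `s |y s|^p`, so integrating over
`[ε, R]` gives `m_p ∫ |y - x|^p ≤ ∫ |x|^p + ε |y ε|^p`, and the boundary term vanishes as
`ε → 0`. This proves the bound for continuous `x`; a general `x ∈ L^p` is the `L^p` and almost
everywhere limit of continuous functions, and Fatou's lemma passes the bound to the limit.
-/

open Set Filter Topology
open scoped ENNReal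

noncomputable section

section Lp

variable {α E : Type*} [MeasurableSpace α] {μ : Measure α} [NormedAddCommGroup E] {q : ℝ≥0∞}

lemma tendsto_eLpNorm_of_tendsto_eLpNorm_sub {ι : Type*} {l : Filter ι} {f : ι → α → E}
    {g : α → E} (hq : 1 ≤ q) (hf : ∀ i, AEStronglyMeasurable (f i) μ)
    (hg : AEStronglyMeasurable g μ) (hfg : Tendsto (fun i => eLpNorm (f i - g) q μ) l (𝓝 0)) :
    Tendsto (fun i => eLpNorm (f i) q μ) l (𝓝 (eLpNorm g q μ)) := by
  have hupper := (tendsto_const_nhds (x := eLpNorm g q μ)).add hfg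
  have hlower := ENNReal.Tendsto.sub (tendsto_const_nhds (x := eLpNorm g q μ)) hfg
    (Or.inr ENNReal.zero_ne_top)
  rw [add_zero] at hupper
  rw [tsub_zero] at hlower
  refine tendsto_of_tendsto_of_tendsto_of_le_of_le hlower hupper (fun i => ?_) fun i => ?_
  · rw [tsub_le_iff_right]
    simpa using eLpNorm_sub_le (hf i) ((hf i).sub hg) hq
  · simpa using eLpNorm_add_le hg ((hf i).sub hg) hq

lemma lintegral_ofReal_abs_rpow {p : ℝ} (hp : 0 < p) (f : α → ℝ) :
    ∫⁻ a, ENNReal.ofReal (|f a| ^ p) ∂μ = eLpNorm f (ENNReal.ofReal p) μ ^ p := by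
  rw [eLpNorm_eq_eLpNorm' (by simpa using hp) ENNReal.ofReal_ne_top,
    ENNReal.toReal_ofReal hp.le, ← lintegral_rpow_enorm_eq_rpow_eLpNorm' hp]
  congr with a
  rw [Real.enorm_eq_ofReal_abs, ENNReal.ofReal_rpow_of_nonneg (abs_nonneg _) hp.le]

lemma MeasureTheory.MemLp.exists_seq_continuous_tendsto_ae [TopologicalSpace α] [NormalSpace α]
    [R1Space α] [WeaklyLocallyCompactSpace α] [BorelSpace α] [μ.Regular] [NormedSpace ℝ E]
    (hq0 : q ≠ 0) (hq : q ≠ ∞) {f : α → E} (hf : MemLp f q μ) :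
    ∃ g : ℕ → α → E, (∀ k, Continuous (g k) ∧ MemLp (g k) q μ) ∧
      Tendsto (fun k => eLpNorm (g k - f) q μ) atTop (𝓝 0) ∧
      ∀ᵐ a ∂μ, Tendsto (fun k => g k a) atTop (𝓝 (f a)) := by
  have hε : ∀ k : ℕ, ((k : ℝ≥0∞) + 1)⁻¹ ≠ 0 := fun k => ENNReal.inv_ne_zero.2 (by simp)
  choose g _ hgf hgc hgm using fun k => hf.exists_hasCompactSupport_eLpNorm_sub_le hq (hε k)
  have hlim : Tendsto (fun k => eLpNorm (g k - f) q μ) atTop (𝓝 0) := by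
    refine tendsto_of_tendsto_of_tendsto_of_le_of_le tendsto_const_nhds
      (ENNReal.tendsto_inv_nat_nhds_zero.comp (tendsto_add_atTop_nat 1)) (fun k => zero_le)
      fun k => ?_
    rw [← eLpNorm_neg, neg_sub]
    simpa using hgf k
  obtain ⟨ns, hns, hae⟩ := (tendstoInMeasure_of_tendsto_eLpNorm hq0
    (fun k => (hgm k).aestronglyMeasurable) hf.aestronglyMeasurable hlim).exists_seq_tendsto_ae
  exact ⟨g ∘ ns, fun k => ⟨hgc _, hgm _⟩, hlim.comp hns.tendsto_atTop, hae⟩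

lemma integrable_and_integral_le_of_lintegral_ofReal_le {f : α → ℝ}
    (hf : AEStronglyMeasurable f μ) (hf0 : 0 ≤ᵐ[μ] f) {c : ℝ} (hc : 0 ≤ c)
    (h : ∫⁻ a, ENNReal.ofReal (f a) ∂μ ≤ ENNReal.ofReal c) :
    Integrable f μ ∧ ∫ a, f a ∂μ ≤ c := by
  refine ⟨⟨hf, (hasFiniteIntegral_iff_ofReal hf0).2 (h.trans_lt ENNReal.ofReal_lt_top)⟩, ?_⟩
  rw [integral_eq_lintegral_of_nonneg_ae hf0 hf]
  exact ENNReal.toReal_le_of_le_ofReal hc h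

end Lp

def fp (p t : ℝ) : ℝ := p * t ^ (p - 1) + (1 - t) ^ p - t ^ p

variable {p : ℝ}

lemma mVal_eq_sInf_fp : mVal p = sInf (fp p '' Icc 0 (1 / 2)) := rfl

lemma fp_zero (hp : 1 < p) : fp p 0 = 1 := by
  simp [fp, Real.zero_rpow (by linarith : p - 1 ≠ 0), Real.zero_rpow (by linarith : p ≠ 0)]

lemma fp_pos (hp : 1 < p) {t : ℝ} (ht : t ∈ Icc (0 : ℝ) (1 / 2)) : 0 < fp p t := by
  obtain ⟨ht0, ht1⟩ := ht
  rcases ht0.eq_or_lt with rfl | ht0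
  · simp [fp_zero hp]
  have hsymm : t ^ p ≤ (1 - t) ^ p := Real.rpow_le_rpow ht0.le (by linarith) (by linarith)
  have hlin : 0 < p * t ^ (p - 1) := by positivity
  unfold fp
  linarith

lemma continuous_fp (hp : 1 < p) : Continuous (fp p) := by
  have hpow : ∀ {q : ℝ}, 0 ≤ q → Continuous fun t : ℝ => t ^ q := Real.continuous_rpow_const
  exact ((continuous_const.mul (hpow (by linarith))).add ((hpow (by linarith)).comp
    (by fun_prop))).sub (hpow (by linarith))

lemma isCompact_image_fp (hp : 1 < p) : IsCompact (fp p '' Icc 0 (1 / 2)) :=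
  isCompact_Icc.image (continuous_fp hp)

lemma mVal_le_fp (hp : 1 < p) {t : ℝ} (ht : t ∈ Icc (0 : ℝ) (1 / 2)) : mVal p ≤ fp p t :=
  csInf_le (isCompact_image_fp hp).bddBelow (mem_image_of_mem _ ht)

lemma mVal_le_one (hp : 1 < p) : mVal p ≤ 1 :=
  fp_zero hp ▸ mVal_le_fp hp ⟨le_rfl, by norm_num⟩

lemma mVal_pos (hp : 1 < p) : 0 < mVal p := by
  obtain ⟨t, ht, hmin⟩ :=
    (isCompact_image_fp hp).sInf_mem ⟨_, mem_image_of_mem _ (left_mem_Icc.2 (by norm_num))⟩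
  rw [mVal_eq_sInf_fp, ← hmin]
  exact fp_pos hp ht

/-- Tangent line inequality for the convex function `u ↦ u ^ q`, `q ≥ 1`. -/
lemma rpow_add_mul_rpow_sub_one_mul_sub_le {q u v : ℝ} (hq : 1 ≤ q) (hu : 0 < u) (hv : 0 ≤ v) :
    u ^ q + q * u ^ (q - 1) * (v - u) ≤ v ^ q := by
  have hbern : 1 + q * (v / u - 1) ≤ (v / u) ^ q := by
    simpa using one_add_mul_self_le_rpow_one_add (s := v / u - 1)
      (by linarith [div_nonneg hv hu.le]) hq
  have hv' : v ^ q = u ^ q * (v / u) ^ q := by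
    rw [← Real.mul_rpow hu.le (by positivity), mul_div_cancel₀ _ hu.ne']
  have hu' : u ^ q = u ^ (q - 1) * u := by
    rw [← Real.rpow_add_one' hu.le (by linarith)]
    ring_nf
  rw [hv']
  calc u ^ q + q * u ^ (q - 1) * (v - u) = u ^ q * (1 + q * (v / u - 1)) := by
        rw [hu']
        field_simp
    _ ≤ _ := mul_le_mul_of_nonneg_left hbern (by positivity)

lemma rpow_sub_two_mul_self {a : ℝ} (ha : 0 ≤ a) (hp : p ≠ 1) : a ^ (p - 2) * a = a ^ (p - 1) := by
  rw [← Real.rpow_add_one' ha (by contrapose! hp; linarith)]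
  ring_nf

lemma monotoneOn_one_add_rpow_sub (hp : 2 ≤ p) :
    MonotoneOn (fun s : ℝ => (1 + s) ^ p - s ^ p - p * s ^ (p - 1)) (Ici 0) := by
  refine monotoneOn_of_hasDerivWithinAt_nonneg (convex_Ici 0) ?_ (fun s hs => ?_) (fun s hs => ?_)
    (f' := fun s => p * (1 + s) ^ (p - 1) - p * s ^ (p - 1) - p * ((p - 1) * s ^ (p - 1 - 1)))
  · have hpow : ∀ {q : ℝ}, 0 ≤ q → Continuous fun t : ℝ => t ^ q := Real.continuous_rpow_const
    exact (((hpow (by linarith)).comp (by fun_prop)).sub (hpow (by linarith))).sub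
      (continuous_const.mul (hpow (by linarith))) |>.continuousOn
  all_goals rw [interior_Ici, mem_Ioi] at hs
  · have hs0 : s ≠ 0 := ne_of_gt hs
    refine HasDerivAt.hasDerivWithinAt ?_
    exact (((Real.hasDerivAt_rpow_const (Or.inr (by linarith))).comp_const_add 1 s).sub
      (Real.hasDerivAt_rpow_const (Or.inl hs0))).sub
      ((Real.hasDerivAt_rpow_const (Or.inl hs0)).const_mul p)
  · have h := rpow_add_mul_rpow_sub_one_mul_sub_le (q := p - 1) (by linarith) hs
      (by linarith : (0 : ℝ) ≤ 1 + s)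
    nlinarith

lemma monotoneOn_rpow_add_abs_one_sub_rpow (hp : 2 ≤ p) :
    MonotoneOn (fun t : ℝ => p * t ^ (p - 1) + |1 - t| ^ p - t ^ p) (Ici (1 / 2)) := by
  refine monotoneOn_of_hasDerivWithinAt_nonneg (convex_Ici _) ?_ (fun t ht => ?_) (fun t ht => ?_)
    (f' := fun t => p * ((p - 1) * t ^ (p - 1 - 1)) + p * |1 - t| ^ (p - 2) * (1 - t) * -1
      - p * t ^ (p - 1))
  · have hpow : ∀ {q : ℝ}, 0 ≤ q → Continuous fun t : ℝ => t ^ q := Real.continuous_rpow_const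
    exact ((continuous_const.mul (hpow (by linarith))).add
      ((hpow (by linarith)).comp (by fun_prop))).sub (hpow (by linarith)) |>.continuousOn
  all_goals rw [interior_Ici, mem_Ioi] at ht
  · have ht0 : t ≠ 0 := by positivity
    refine HasDerivAt.hasDerivWithinAt ?_
    exact (((Real.hasDerivAt_rpow_const (Or.inl ht0)).const_mul p).add
      ((hasDerivAt_abs_rpow (1 - t) (by linarith)).comp t ((hasDerivAt_id t).const_sub 1))).sub
      (Real.hasDerivAt_rpow_const (Or.inl ht0))
  · have htp : t ^ (p - 1) = t ^ (p - 2) * t :=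
      (rpow_sub_two_mul_self (by linarith) (by linarith)).symm
    have hpp : p - 1 - 1 = p - 2 := by ring
    simp only [hpp, htp]
    have hA : 0 ≤ t ^ (p - 2) := by positivity
    rcases le_or_gt t 1 with ht1 | ht1
    · have hpow : |1 - t| ^ (p - 2) * (1 - t) ≤ t ^ (p - 2) * (1 - t) := by
        rw [abs_of_nonneg (by linarith)]
        gcongr
        linarith
      nlinarith [mul_le_mul_of_nonneg_left hpow (by linarith : 0 ≤ p),
        mul_nonneg (mul_nonneg (by linarith : 0 ≤ p) hA) (by linarith : 0 ≤ p - 2)]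
    · have h := rpow_add_mul_rpow_sub_one_mul_sub_le (q := p - 1) (by linarith)
        (by linarith : 0 < t) (by linarith : (0 : ℝ) ≤ t - 1)
      rw [← rpow_sub_two_mul_self (a := t - 1) (by linarith) (by linarith), hpp, htp] at h
      rw [abs_of_neg (by linarith : 1 - t < 0), neg_sub]
      nlinarith [mul_le_mul_of_nonneg_left h (by linarith : 0 ≤ p)]

lemma mVal_le_abs_add_one_rpow_sub (hp : 2 ≤ p) (a : ℝ) :
    mVal p ≤ |a + 1| ^ p - |a| ^ p - p * |a| ^ (p - 2) * a := by
  rcases le_or_gt 0 a with ha | ha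
  · have hG := monotoneOn_one_add_rpow_sub hp self_mem_Ici ha ha
    simp only [add_zero, Real.one_rpow, Real.zero_rpow (by linarith : p ≠ 0),
      Real.zero_rpow (by linarith : p - 1 ≠ 0), mul_zero, sub_zero] at hG
    rw [abs_of_nonneg ha, abs_of_nonneg (by linarith), mul_assoc,
      rpow_sub_two_mul_self ha (by linarith), add_comm a]
    linarith [mVal_le_one (by linarith : 1 < p)]
  · set t := -a with ht
    have hφ : |a + 1| ^ p - |a| ^ p - p * |a| ^ (p - 2) * a
        = p * t ^ (p - 1) + |1 - t| ^ p - t ^ p := by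
      rw [abs_of_neg ha, ← ht, show a + 1 = 1 - t by ring, show a = -t by ring, mul_neg,
        mul_assoc, rpow_sub_two_mul_self (by linarith) (by linarith)]
      ring
    have hF : ∀ u ∈ Icc (0 : ℝ) (1 / 2), p * u ^ (p - 1) + |1 - u| ^ p - u ^ p = fp p u :=
      fun u hu => by rw [abs_of_nonneg (by linarith [hu.2])]; rfl
    rw [hφ]
    rcases le_or_gt t (1 / 2) with ht2 | ht2
    · rw [hF t ⟨by linarith, ht2⟩]
      exact mVal_le_fp (by linarith) ⟨by linarith, ht2⟩
    · calc mVal p ≤ fp p (1 / 2) := mVal_le_fp (by linarith) ⟨by norm_num, le_rfl⟩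
        _ = _ := (hF _ ⟨by norm_num, le_rfl⟩).symm
        _ ≤ _ := monotoneOn_rpow_add_abs_one_sub_rpow hp self_mem_Ici ht2.le ht2.le

lemma abs_rpow_add_mul_add_mVal_mul_le (hp : 2 ≤ p) (a b : ℝ) :
    |a| ^ p + p * |a| ^ (p - 2) * a * b + mVal p * |b| ^ p ≤ |a + b| ^ p := by
  rcases eq_or_ne b 0 with rfl | hb
  · simp [Real.zero_rpow (by linarith : p ≠ 0)]
  have hb' : 0 < |b| := abs_pos.2 hb
  -- by homogeneity, this is the case `b = 1` with `a / b` in place of `a`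
  have hscale : |b| ^ (p - 2) * b * b = |b| ^ p := by
    rw [mul_assoc, ← sq, ← sq_abs, ← Real.rpow_natCast, ← Real.rpow_add hb']
    norm_num
  obtain ⟨c, rfl⟩ : ∃ c, a = c * b := ⟨a / b, (div_mul_cancel₀ a hb).symm⟩
  have h := mul_le_mul_of_nonneg_right (mVal_le_abs_add_one_rpow_sub hp c)
    (Real.rpow_nonneg hb'.le p)
  rw [show c * b + b = (c + 1) * b by ring]
  simp only [abs_mul, Real.mul_rpow (abs_nonneg _) hb'.le, ← hscale] at h ⊢
  nlinarith


/-- Hardy's averaging operator `P`. -/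
def hardyAverage (x : ℝ → ℝ) (s : ℝ) : ℝ := (1 / s) * ∫ θ in (0 : ℝ)..s, x θ

lemma continuousOn_hardyAverage {x : ℝ → ℝ} (hx : ∀ b, 0 < b → IntervalIntegrable x volume 0 b) :
    ContinuousOn (hardyAverage x) (Ioi 0) := by
  intro s hs
  have hs : 0 < s := hs
  have hprim := intervalIntegral.continuousOn_primitive_interval' (hx (s + 1) (by linarith))
    left_mem_uIcc
  rw [uIcc_of_le (by linarith)] at hprim
  refine ContinuousAt.continuousWithinAt ?_
  exact (continuousAt_const.div continuousAt_id hs.ne').mul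
    (hprim.continuousAt (Icc_mem_nhds (by linarith) (by linarith)))

lemma hasDerivAt_hardyAverage {g : ℝ → ℝ} (hg : Continuous g) {s : ℝ} (hs : 0 < s) :
    HasDerivAt (hardyAverage g) ((g s - hardyAverage g s) / s) s := by
  have hG : HasDerivAt (fun u => ∫ θ in (0 : ℝ)..u, g θ) (g s) s :=
    intervalIntegral.integral_hasDerivAt_right (hg.intervalIntegrable 0 s)
      (hg.stronglyMeasurableAtFilter volume _) hg.continuousAt
  have hinv : HasDerivAt (fun u : ℝ => 1 / u) (-(s ^ 2)⁻¹) s := by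
    simpa only [one_div] using hasDerivAt_inv hs.ne'
  refine (hinv.mul hG).congr_deriv ?_
  simp only [hardyAverage]
  field_simp
  ring

lemma tendsto_mul_abs_hardyAverage_rpow {g : ℝ → ℝ} (hg : Continuous g) (hp : 0 < p) :
    Tendsto (fun ε => ε * |hardyAverage g ε| ^ p) (𝓝[>] 0) (𝓝 0) := by
  have hslope := (intervalIntegral.integral_hasDerivAt_right (hg.intervalIntegrable 0 0)
    (hg.stronglyMeasurableAtFilter volume _) hg.continuousAt).tendsto_slope_zero_right
  have hP : Tendsto (hardyAverage g) (𝓝[>] 0) (𝓝 (g 0)) := by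
    refine hslope.congr fun ε => ?_
    simp [hardyAverage]
  have hcont : Continuous fun v : ℝ => |v| ^ p := continuous_abs.rpow_const fun _ => Or.inr hp.le
  simpa using (tendsto_nhdsWithin_of_tendsto_nhds tendsto_id).mul ((hcont.tendsto _).comp hP)

lemma continuousOn_abs_hardyAverage_sub_rpow (hp : 0 ≤ p) {g : ℝ → ℝ} (hg : Continuous g) :
    ContinuousOn (fun s => |hardyAverage g s - g s| ^ p) (Ioi 0) :=
  ((continuousOn_hardyAverage fun b _ => hg.intervalIntegrable 0 b).sub
    hg.continuousOn).abs.rpow_const fun _ _ => Or.inr hp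

lemma intervalIntegral_abs_hardyAverage_sub_rpow_le (hp : 2 ≤ p) {g : ℝ → ℝ} (hg : Continuous g)
    {ε R : ℝ} (hε : 0 < ε) (hεR : ε ≤ R) :
    ∫ s in ε..R, |hardyAverage g s - g s| ^ p
      ≤ (mVal p)⁻¹ * ((∫ s in ε..R, |g s| ^ p) + ε * |hardyAverage g ε| ^ p) := by
  set y := hardyAverage g
  set F' : ℝ → ℝ := fun s => |y s| ^ p + p * |y s| ^ (p - 2) * y s * (g s - y s)
  have hsub : uIcc ε R ⊆ Ioi 0 := by
    rw [uIcc_of_le hεR]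
    exact fun s hs => hε.trans_le hs.1
  -- `F'` is the derivative of `s ↦ s |y s|^p`, since `s y' = g - y`
  have hderiv : ∀ s ∈ uIcc ε R, HasDerivAt (fun u => u * |y u| ^ p) (F' s) s := by
    intro s hs
    have hs : 0 < s := hsub hs
    refine ((hasDerivAt_id s).mul ((hasDerivAt_abs_rpow (y s) (by linarith)).comp s
      (hasDerivAt_hardyAverage hg hs))).congr_deriv ?_
    simp only [F', id, Function.comp_apply]
    field_simp
    rfl
  have hpt : ∀ s, mVal p * |y s - g s| ^ p ≤ |g s| ^ p - F' s := by
    intro s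
    have h := abs_rpow_add_mul_add_mVal_mul_le hp (y s) (g s - y s)
    rw [add_sub_cancel, abs_sub_comm] at h
    simp only [F']
    linarith
  have hyc : ContinuousOn y (uIcc ε R) := (continuousOn_hardyAverage fun b _ =>
    hg.intervalIntegrable 0 b).mono hsub
  have habs : ∀ {q : ℝ}, 0 ≤ q → Continuous fun v : ℝ => |v| ^ q :=
    fun hq => continuous_abs.rpow_const fun _ => Or.inr hq
  have hF'c : ContinuousOn F' (uIcc ε R) :=
    ((habs (by linarith)).comp_continuousOn hyc).add
      (((continuousOn_const.mul ((habs (by linarith)).comp_continuousOn hyc)).mul hyc).mul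
        (hg.continuousOn.sub hyc))
  have hint_g : IntervalIntegrable (fun s => |g s| ^ p) volume ε R :=
    ((habs (by linarith)).comp hg).intervalIntegrable ε R
  have hint_F' : IntervalIntegrable F' volume ε R := hF'c.intervalIntegrable
  have hint_yg : IntervalIntegrable (fun s => mVal p * |y s - g s| ^ p) volume ε R :=
    (continuousOn_const.mul ((habs (by linarith)).comp_continuousOn
      (hyc.sub hg.continuousOn))).intervalIntegrable
  have hFTC : ∫ s in ε..R, F' s = R * |y R| ^ p - ε * |y ε| ^ p :=
    intervalIntegral.integral_eq_sub_of_hasDerivAt hderiv hint_F'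
  have hmono := intervalIntegral.integral_mono_on hεR hint_yg (hint_g.sub hint_F')
    fun s _ => hpt s
  rw [intervalIntegral.integral_const_mul, intervalIntegral.integral_sub hint_g hint_F',
    hFTC] at hmono
  rw [le_inv_mul_iff₀ (mVal_pos (by linarith))]
  have : 0 ≤ R * |y R| ^ p := mul_nonneg (hε.le.trans hεR) (by positivity)
  linarith

lemma lintegral_abs_hardyAverage_sub_rpow_le_of_continuous (hp : 2 ≤ p) {g : ℝ → ℝ}
    (hg : Continuous g) :
    ∫⁻ s in Ioi 0, ENNReal.ofReal (|hardyAverage g s - g s| ^ p)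
      ≤ ENNReal.ofReal (mVal p)⁻¹ * ∫⁻ s in Ioi 0, ENNReal.ofReal (|g s| ^ p) := by
  set f : ℝ → ℝ := fun s => |hardyAverage g s - g s| ^ p
  have hfc : ContinuousOn f (Ioi 0) := continuousOn_abs_hardyAverage_sub_rpow (by linarith) hg
  have hcover : AECover (volume.restrict (Ioi 0)) (𝓝[>] 0) fun ε : ℝ => Ioc ε ε⁻¹ := by
    exact (aecover_Ioi_of_Ioi (μ := volume) (tendsto_nhdsWithin_of_tendsto_nhds tendsto_id)).inter
        ((aecover_Iic tendsto_inv_nhdsGT_zero).mono Measure.restrict_le_self)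
  have hlim := hcover.lintegral_tendsto_of_countably_generated
    (hfc.aemeasurable measurableSet_Ioi).ennreal_ofReal
  have hbound : Tendsto (fun ε => ENNReal.ofReal (mVal p)⁻¹ *
      ((∫⁻ s in Ioi 0, ENNReal.ofReal (|g s| ^ p)) + ENNReal.ofReal (ε * |hardyAverage g ε| ^ p)))
      (𝓝[>] 0) (𝓝 (ENNReal.ofReal (mVal p)⁻¹ * ∫⁻ s in Ioi 0, ENNReal.ofReal (|g s| ^ p))) := by
    have h := (ENNReal.continuous_ofReal.tendsto 0).comp
      (tendsto_mul_abs_hardyAverage_rpow hg (by linarith : 0 < p))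
    rw [ENNReal.ofReal_zero] at h
    simpa using ENNReal.Tendsto.const_mul (tendsto_const_nhds.add h) (Or.inr ENNReal.ofReal_ne_top)
  refine le_of_tendsto_of_tendsto hlim hbound ?_
  filter_upwards [Ioo_mem_nhdsGT (zero_lt_one' ℝ)] with ε hε
  have hεε : ε ≤ ε⁻¹ := by
    have := one_lt_inv_iff₀.2 hε
    linarith [hε.2]
  have hsub : Icc ε ε⁻¹ ⊆ Ioi 0 := fun s hs => hε.1.trans_le hs.1
  have hint : IntegrableOn f (Ioc ε ε⁻¹) :=
    ((hfc.mono hsub).integrableOn_Icc).mono_set Ioc_subset_Icc_self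
  have hint_g : IntegrableOn (fun s => |g s| ^ p) (Ioc ε ε⁻¹) :=
    (hg.abs.rpow_const fun _ => Or.inr (by linarith)).integrableOn_Ioc
  rw [Measure.restrict_restrict measurableSet_Ioc,
    inter_eq_left.2 (Ioc_subset_Icc_self.trans hsub),
    ← ofReal_integral_eq_lintegral_ofReal hint (ae_of_all _ fun s => by positivity),
    ← intervalIntegral.integral_of_le hεε]
  calc ENNReal.ofReal (∫ s in ε..ε⁻¹, f s)
      ≤ ENNReal.ofReal ((mVal p)⁻¹ * ((∫ s in ε..ε⁻¹, |g s| ^ p) + ε * |hardyAverage g ε| ^ p)) :=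
        ENNReal.ofReal_le_ofReal (intervalIntegral_abs_hardyAverage_sub_rpow_le hp hg hε.1 hεε)
    _ = ENNReal.ofReal (mVal p)⁻¹ * (ENNReal.ofReal (∫ s in ε..ε⁻¹, |g s| ^ p)
          + ENNReal.ofReal (ε * |hardyAverage g ε| ^ p)) := by
        rw [ENNReal.ofReal_mul (inv_nonneg.2 (mVal_pos (by linarith)).le),
          ENNReal.ofReal_add (intervalIntegral.integral_nonneg hεε fun s _ => by positivity)
            (mul_nonneg hε.1.le (by positivity))]
    _ ≤ _ := by
        gcongr
        rw [intervalIntegral.integral_of_le hεε,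
          ofReal_integral_eq_lintegral_ofReal hint_g (ae_of_all _ fun s => by positivity)]
        exact lintegral_mono_set (Ioc_subset_Icc_self.trans hsub)

lemma integrableOn_Ioc_of_memLp_restrict_Ioi {q : ℝ≥0∞} (hq : 1 ≤ q) {x : ℝ → ℝ}
    (hx : MemLp x q (volume.restrict (Ioi 0))) (b : ℝ) : IntegrableOn x (Ioc 0 b) :=
  (hx.mono_measure (Measure.restrict_mono Ioc_subset_Ioi_self le_rfl)).integrable hq

lemma tendsto_hardyAverage_of_tendsto_eLpNorm {ι : Type*} {l : Filter ι} {q : ℝ≥0∞} (hq : 1 ≤ q)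
    {x : ℝ → ℝ} {g : ι → ℝ → ℝ} (hx : MemLp x q (volume.restrict (Ioi 0)))
    (hg : ∀ i, MemLp (g i) q (volume.restrict (Ioi 0)))
    (hgx : Tendsto (fun i => eLpNorm (g i - x) q (volume.restrict (Ioi 0))) l (𝓝 0))
    {s : ℝ} (hs : 0 < s) :
    Tendsto (fun i => hardyAverage (g i) s) l (𝓝 (hardyAverage x s)) := by
  refine Tendsto.const_mul _ ?_
  simp only [intervalIntegral.integral_of_le hs.le]
  set ν := volume.restrict (Ioc (0 : ℝ) s)
  have hνμ : ν ≤ volume.restrict (Ioi 0) := Measure.restrict_mono Ioc_subset_Ioi_self le_rfl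
  -- on the finite measure `ν`, convergence in `L^q` implies convergence in `L^1`
  set C := ν univ ^ (1 / (1 : ℝ≥0∞).toReal - 1 / q.toReal)
  have hC : C ≠ ∞ := by
    refine ENNReal.rpow_ne_top_of_ne_zero ?_ ?_ <;>
      simp [ν, hs]
  have hL1 : Tendsto (fun i => ∫⁻ a, ‖g i a - x a‖ₑ ∂ν) l (𝓝 0) := by
    have hlim : Tendsto (fun i => eLpNorm (g i - x) q (volume.restrict (Ioi 0)) * C) l (𝓝 0) := by
      simpa using ENNReal.Tendsto.mul_const hgx (Or.inr hC)
    refine tendsto_of_tendsto_of_tendsto_of_le_of_le tendsto_const_nhds hlim (fun i => zero_le)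
      fun i => ?_
    calc ∫⁻ a, ‖g i a - x a‖ₑ ∂ν = eLpNorm (g i - x) 1 ν := eLpNorm_one_eq_lintegral_enorm.symm
      _ ≤ eLpNorm (g i - x) q ν * C := eLpNorm_le_eLpNorm_mul_rpow_measure_univ hq
          (((hg i).sub hx).aestronglyMeasurable.mono_measure hνμ)
      _ ≤ _ := by gcongr
  exact tendsto_integral_of_L1 x (hx.aestronglyMeasurable.mono_measure hνμ)
    (Eventually.of_forall fun i => integrableOn_Ioc_of_memLp_restrict_Ioi hq (hg i) s) hL1

lemma lintegral_abs_hardyAverage_sub_rpow_le (hp : 2 ≤ p) {x : ℝ → ℝ}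
    (hx : MemLp x (ENNReal.ofReal p) (volume.restrict (Ioi 0))) :
    ∫⁻ s in Ioi 0, ENNReal.ofReal (|hardyAverage x s - x s| ^ p)
      ≤ ENNReal.ofReal (mVal p)⁻¹ * ∫⁻ s in Ioi 0, ENNReal.ofReal (|x s| ^ p) := by
  have hq : 1 ≤ ENNReal.ofReal p := ENNReal.one_le_ofReal.2 (by linarith)
  obtain ⟨g, hg, hgx, hae⟩ :=
    hx.exists_seq_continuous_tendsto_ae (zero_lt_one.trans_le hq).ne' ENNReal.ofReal_ne_top
  set F : ℕ → ℝ → ℝ≥0∞ := fun k s => ENNReal.ofReal (|hardyAverage (g k) s - g k s| ^ p)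
  have hF : ∀ᵐ s ∂volume.restrict (Ioi 0),
      Tendsto (fun k => F k s) atTop (𝓝 (ENNReal.ofReal (|hardyAverage x s - x s| ^ p))) := by
    filter_upwards [hae, ae_restrict_mem measurableSet_Ioi] with s hs hs0
    have hcont : Continuous fun v : ℝ => ENNReal.ofReal (|v| ^ p) :=
      ENNReal.continuous_ofReal.comp (continuous_abs.rpow_const fun _ => Or.inr (by linarith))
    exact (hcont.tendsto _).comp
      ((tendsto_hardyAverage_of_tendsto_eLpNorm hq hx (fun k => (hg k).2) hgx hs0).sub hs)
  have hgx' : Tendsto (fun k => ∫⁻ s in Ioi 0, ENNReal.ofReal (|g k s| ^ p)) atTop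
      (𝓝 (∫⁻ s in Ioi 0, ENNReal.ofReal (|x s| ^ p))) := by
    simp only [lintegral_ofReal_abs_rpow (by linarith : 0 < p)]
    exact (ENNReal.continuous_rpow_const.tendsto _).comp
      (tendsto_eLpNorm_of_tendsto_eLpNorm_sub hq (fun k => (hg k).2.1) hx.1 hgx)
  calc ∫⁻ s in Ioi 0, ENNReal.ofReal (|hardyAverage x s - x s| ^ p)
      = ∫⁻ s in Ioi 0, liminf (fun k => F k s) atTop :=
        lintegral_congr_ae (hF.mono fun s hs => hs.liminf_eq.symm)
    _ ≤ liminf (fun k => ∫⁻ s in Ioi 0, F k s) atTop := lintegral_liminf_le' fun k =>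
        (continuousOn_abs_hardyAverage_sub_rpow (by linarith) (hg k).1).aemeasurable
          measurableSet_Ioi |>.ennreal_ofReal
    _ ≤ liminf (fun k => ENNReal.ofReal (mVal p)⁻¹ * ∫⁻ s in Ioi 0, ENNReal.ofReal (|g k s| ^ p))
          atTop := liminf_le_liminf (Eventually.of_forall fun k =>
        lintegral_abs_hardyAverage_sub_rpow_le_of_continuous hp (hg k).1)
    _ = _ := (ENNReal.Tendsto.const_mul hgx' (Or.inr ENNReal.ofReal_ne_top)).liminf_eq

theorem integrableOn_abs_hardyAverage_sub_rpow_and_integral_le (hp : 2 ≤ p) {x : ℝ → ℝ}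
    (hx : MemLp x (ENNReal.ofReal p) (volume.restrict (Ioi 0))) :
    IntegrableOn (fun s => |hardyAverage x s - x s| ^ p) (Ioi 0) ∧
    ∫ s in Ioi 0, |hardyAverage x s - x s| ^ p ≤ (mVal p)⁻¹ * ∫ s in Ioi 0, |x s| ^ p := by
  have hq : 1 ≤ ENNReal.ofReal p := ENNReal.one_le_ofReal.2 (by linarith)
  have hPx : ContinuousOn (hardyAverage x) (Ioi 0) := continuousOn_hardyAverage fun b hb =>
    (intervalIntegrable_iff_integrableOn_Ioc_of_le hb.le).2
      (integrableOn_Ioc_of_memLp_restrict_Ioi hq hx b)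
  have hmeas : AEStronglyMeasurable (fun s => |hardyAverage x s - x s| ^ p)
      (volume.restrict (Ioi 0)) :=
    (continuous_abs.rpow_const fun _ => Or.inr (by linarith)).comp_aestronglyMeasurable
      ((hPx.aestronglyMeasurable measurableSet_Ioi).sub hx.1)
  have hxp : Integrable (fun s => |x s| ^ p) (volume.restrict (Ioi 0)) := by
    simpa [ENNReal.toReal_ofReal (by linarith : 0 ≤ p)] using
      hx.integrable_norm_rpow (zero_lt_one.trans_le hq).ne' ENNReal.ofReal_ne_top
  have hm : 0 ≤ (mVal p)⁻¹ := inv_nonneg.2 (mVal_pos (by linarith)).le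
  refine integrable_and_integral_le_of_lintegral_ofReal_le hmeas
    (ae_of_all _ fun s => by positivity)
    (mul_nonneg hm (integral_nonneg fun s => by positivity)) ?_
  rw [ENNReal.ofReal_mul hm, ofReal_integral_eq_lintegral_ofReal hxp
    (ae_of_all _ fun s => by positivity)]
  exact lintegral_abs_hardyAverage_sub_rpow_le hp hx

end

theorem stmt13_general (p : ℝ) (hp2 : 2 < p)
    (x : ℝ → ℝ) (hx : MemLp x (ENNReal.ofReal p) (volume.restrict (Set.Ioi 0)))
    (y : ℝ → ℝ) (hy : ∀ s : ℝ, 0 < s → y s = (1 / s) * ∫ θ in (0 : ℝ)..s, x θ) :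
    IntegrableOn (fun s => |y s - x s| ^ p) (Set.Ioi 0) ∧
    ∫ s in Set.Ioi (0 : ℝ), |y s - x s| ^ p
      ≤ (mVal p)⁻¹ * ∫ s in Set.Ioi (0 : ℝ), |x s| ^ p := by
  have hyx : EqOn (fun s => |y s - x s| ^ p) (fun s => |hardyAverage x s - x s| ^ p) (Ioi 0) :=
    fun s hs => by simp only [hy s hs, hardyAverage]
  obtain ⟨hint, hle⟩ := integrableOn_abs_hardyAverage_sub_rpow_and_integral_le hp2.le hx
  exact ⟨hint.congr_fun hyx.symm measurableSet_Ioi,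
    (setIntegral_congr_fun measurableSet_Ioi hyx).trans_le hle⟩

/-- Corollary (continuous case): for `p = 2i/(2j+1) > 2` and real-valued `x ∈ L^p(0,∞)`,
setting `y s = (1/s) ∫_0^s x`, one has `∫_0^∞ |y - x|^p ≤ (1/m_p) ∫_0^∞ |x|^p`. -/
theorem stmt13 (p : ℝ) (i j : ℕ) (hi : 0 < i) (hj : 0 < j)
    (hp : p = 2 * (i : ℝ) / (2 * (j : ℝ) + 1)) (hp2 : 2 < p)
    (x : ℝ → ℝ) (hx : MemLp x (ENNReal.ofReal p) (volume.restrict (Set.Ioi 0)))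
    (y : ℝ → ℝ) (hy : ∀ s : ℝ, 0 < s → y s = (1 / s) * ∫ θ in (0 : ℝ)..s, x θ) :
    IntegrableOn (fun s => |y s - x s| ^ p) (Set.Ioi 0) ∧
    ∫ s in Set.Ioi (0 : ℝ), |y s - x s| ^ p
      ≤ (mVal p)⁻¹ * ∫ s in Set.Ioi (0 : ℝ), |x s| ^ p :=
  stmt13_general p hp2 x hx y hy
end

section
/- The minimum value of the function f_4(t) = 4t^3 + (1-t)^4 - t^4 on the interval [0, 1/2] equals 1/3; consequently the operator norm of C - I on ℓ^4 equals 3^{1/4}, i.e., m_4 = 1/3. -/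
/-!
For `p = 4` the function is `f₄(t) = 1 - 4t + 6t² = 1/3 + 6 (t - 1/3)²`.

Upper bound: writing `A_n` for the average of the first `n` terms, `3 n A_n⁴` is a Bellman
function, `(A_{n+1} - x_{n+1})⁴ + 3 (n+1) A_{n+1}⁴ ≤ 3 x_{n+1}⁴ + 3 n A_n⁴`, which after clearing
denominators is `n` times a sum of squares; summing over `n` telescopes.

Sharpness: take partial sums `S_m = m` for `m ≤ N` and `S_m = N(N-1)(N-2)/((m-1)(m-2))` after.
The Cesàro defect vanishes up to `N`, and both tails are of size `∑ m⁻¹²`, which we compare with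
the telescoping sums of `m⁻¹¹`; the ratio of the two sides tends to `(81/11) / (1 + 16/11) = 3`
as `N → ∞`. The decay `S_m ≈ m⁻²` is the one matching the minimiser `t = 1/3 = 1/(1+2)` of `f₄`.
-/

open Filter Finset Topology

lemma abs_rpow_four (t : ℝ) : |t| ^ (4 : ℝ) = t ^ 4 := by
  rw [show (4 : ℝ) = (4 : ℕ) by norm_num, Real.rpow_natCast, Even.pow_abs ⟨2, rfl⟩]

lemma le_one_div_pow_sub_one_div_add_one_pow {a : ℝ} (ha : 0 < a) (k : ℕ) :
    k / (a + 1) ^ (k + 1) ≤ 1 / a ^ k - 1 / (a + 1) ^ k := by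
  have hb : 1 + k * (1 / a) ≤ ((a + 1) / a) ^ k := by
    rw [add_div, div_self ha.ne']
    exact one_add_mul_le_pow (by linarith [one_div_pos.2 ha]) k
  calc (k : ℝ) / (a + 1) ^ (k + 1) = k / (a + 1) / (a + 1) ^ k := by rw [pow_succ', div_div]
    _ ≤ k * (1 / a) / (a + 1) ^ k := by gcongr; rw [← div_eq_mul_one_div]; gcongr; linarith
    _ ≤ (((a + 1) / a) ^ k - 1) / (a + 1) ^ k := by gcongr; linarith
    _ = 1 / a ^ k - 1 / (a + 1) ^ k := by rw [div_pow]; field_simp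

lemma one_div_pow_sub_one_div_add_one_pow_le {a : ℝ} (ha : 0 < a) (k : ℕ) :
    1 / a ^ k - 1 / (a + 1) ^ k ≤ k / a ^ (k + 1) := by
  have hb : 1 + k * -(1 / (a + 1)) ≤ (a / (a + 1)) ^ k := by
    have : a / (a + 1) = 1 + -(1 / (a + 1)) := by field_simp; ring
    rw [this]
    refine one_add_mul_le_pow ?_ k
    have : 1 / (a + 1) ≤ 1 := by rw [div_le_one (by linarith)]; linarith
    linarith
  calc 1 / a ^ k - 1 / (a + 1) ^ k = (1 - (a / (a + 1)) ^ k) / a ^ k := by rw [div_pow]; field_simp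
    _ ≤ k * (1 / (a + 1)) / a ^ k := by gcongr; linarith
    _ ≤ k * (1 / a) / a ^ k := by gcongr; linarith
    _ = k / a ^ (k + 1) := by rw [pow_succ']; field_simp

lemma sum_range_le_of_le_sub_succ {f g : ℕ → ℝ} (hg : ∀ n, 0 ≤ g n)
    (hfg : ∀ n, f n ≤ g n - g (n + 1)) (n : ℕ) : ∑ i ∈ range n, f i ≤ g 0 :=
  calc ∑ i ∈ range n, f i ≤ ∑ i ∈ range n, (g i - g (i + 1)) := sum_le_sum fun i _ ↦ hfg i
    _ = g 0 - g n := sum_range_sub' g n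
    _ ≤ g 0 := sub_le_self _ (hg n)

lemma le_tsum_of_sub_succ_le {f g : ℕ → ℝ} (hf : Summable f) (hf₀ : ∀ n, 0 ≤ f n)
    (hg : Tendsto g atTop (𝓝 0)) (hfg : ∀ n, g n - g (n + 1) ≤ f n) : g 0 ≤ ∑' n, f n := by
  have hlim : Tendsto (fun n ↦ g 0 - g n) atTop (𝓝 (g 0)) := by
    simpa using tendsto_const_nhds.sub hg
  refine le_of_tendsto' hlim fun n ↦ ?_
  calc g 0 - g n = ∑ i ∈ range n, (g i - g (i + 1)) := (sum_range_sub' g n).symm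
    _ ≤ ∑ i ∈ range n, f i := sum_le_sum fun i _ ↦ hfg i
    _ ≤ ∑' i, f i := hf.sum_le_tsum _ fun i _ ↦ hf₀ i

noncomputable def cesaroDefect (a : ℕ → ℝ) (n : ℕ) : ℝ :=
  1 / ((n : ℝ) + 1) * (∑ k ∈ range (n + 1), a k) - a n

lemma cesaro_pow_four_step {n u z : ℝ} (hn : 0 ≤ n) :
    ((n * u + z) / (n + 1) - z) ^ 4 + 3 * (n + 1) * ((n * u + z) / (n + 1)) ^ 4
      ≤ 3 * z ^ 4 + 3 * n * u ^ 4 := by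
  have hsos : 3 * (n + 1) ^ 4 * z ^ 4 + 3 * (n + 1) ^ 4 * n * u ^ 4
        - (n ^ 4 * (z - u) ^ 4 + 3 * (n + 1) * (n * u + z) ^ 4)
      = n * ((z - u) ^ 2 * ((3 * (z - u) + 4 * u) ^ 2 + 2 * u ^ 2)
        + n * ((z - u) ^ 2 * (2 * (3 * (z - u) + 5 * u) ^ 2 + 4 * u ^ 2))
        + n ^ 2 * ((z - u) ^ 2 * (12 * ((z - u) + 2 * u) ^ 2 + 6 * u ^ 2))
        + n ^ 3 * ((z - u) ^ 2 * (2 * ((z - u) + 3 * u) ^ 2))) := by ring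
  have hpoly : n ^ 4 * (z - u) ^ 4 + 3 * (n + 1) * (n * u + z) ^ 4
      ≤ 3 * (n + 1) ^ 4 * z ^ 4 + 3 * (n + 1) ^ 4 * n * u ^ 4 := by
    have : 0 ≤ 3 * (n + 1) ^ 4 * z ^ 4 + 3 * (n + 1) ^ 4 * n * u ^ 4
        - (n ^ 4 * (z - u) ^ 4 + 3 * (n + 1) * (n * u + z) ^ 4) := by
      rw [hsos]; positivity
    linarith
  have hn1 : 0 < n + 1 := by linarith
  calc ((n * u + z) / (n + 1) - z) ^ 4 + 3 * (n + 1) * ((n * u + z) / (n + 1)) ^ 4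
      = (n ^ 4 * (z - u) ^ 4 + 3 * (n + 1) * (n * u + z) ^ 4) / (n + 1) ^ 4 := by
        field_simp; ring
    _ ≤ (3 * (n + 1) ^ 4 * z ^ 4 + 3 * (n + 1) ^ 4 * n * u ^ 4) / (n + 1) ^ 4 := by gcongr
    _ = 3 * z ^ 4 + 3 * n * u ^ 4 := by field_simp

noncomputable def cesaroPotential (a : ℕ → ℝ) (n : ℕ) : ℝ := 3 * n * ((∑ k ∈ range n, a k) / n) ^ 4

lemma cesaroDefect_pow_four_le (a : ℕ → ℝ) (n : ℕ) :
    cesaroDefect a n ^ 4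
      ≤ 3 * a n ^ 4 - (cesaroPotential a (n + 1) - cesaroPotential a n) := by
  have hsum : (n : ℝ) * ((∑ k ∈ range n, a k) / n) + a n = ∑ k ∈ range (n + 1), a k := by
    rw [sum_range_succ]
    rcases n.eq_zero_or_pos with rfl | hn
    · simp
    · rw [mul_div_cancel₀ _ (by positivity)]
  have key := cesaro_pow_four_step (u := (∑ k ∈ range n, a k) / n) (z := a n) n.cast_nonneg
  rw [hsum] at key
  simp only [cesaroDefect, cesaroPotential, Nat.cast_succ]
  rw [one_div_mul_eq_div]
  linarith

lemma sum_range_cesaroDefect_pow_four_le {a : ℕ → ℝ} (hs : Summable fun n ↦ a n ^ 4) (K : ℕ) :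
    ∑ n ∈ range K, cesaroDefect a n ^ 4 ≤ 3 * ∑' n, a n ^ 4 :=
  calc ∑ n ∈ range K, cesaroDefect a n ^ 4
      ≤ ∑ n ∈ range K, (3 * a n ^ 4 - (cesaroPotential a (n + 1) - cesaroPotential a n)) :=
        sum_le_sum fun n _ ↦ cesaroDefect_pow_four_le a n
    _ = 3 * ∑ n ∈ range K, a n ^ 4 - cesaroPotential a K := by
        rw [sum_sub_distrib, sum_range_sub, ← mul_sum]; simp [cesaroPotential]
    _ ≤ 3 * ∑' n, a n ^ 4 := by
        have : 0 ≤ cesaroPotential a K := by unfold cesaroPotential; positivity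
        have := hs.sum_le_tsum (range K) fun n _ ↦ by positivity
        linarith

lemma summable_cesaroDefect_pow_four {a : ℕ → ℝ} (hs : Summable fun n ↦ a n ^ 4) :
    Summable fun n ↦ cesaroDefect a n ^ 4 :=
  summable_of_sum_range_le (fun n ↦ by positivity) (sum_range_cesaroDefect_pow_four_le hs)

lemma tsum_cesaroDefect_pow_four_le {a : ℕ → ℝ} (hs : Summable fun n ↦ a n ^ 4) :
    ∑' n, cesaroDefect a n ^ 4 ≤ 3 * ∑' n, a n ^ 4 :=
  Real.tsum_le_of_sum_range_le (fun n ↦ by positivity) (sum_range_cesaroDefect_pow_four_le hs)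

noncomputable def extremalScale (N : ℕ) : ℝ := N * (N - 1) * (N - 2)

-- `extremalScale N` makes the two branches agree at `m = N`.
noncomputable def extremalPartialSum (N m : ℕ) : ℝ :=
  if m ≤ N then m else extremalScale N / ((m - 1) * (m - 2))

noncomputable def extremalSeq (N n : ℕ) : ℝ := extremalPartialSum N (n + 1) - extremalPartialSum N n

lemma sum_range_extremalSeq (N n : ℕ) :
    ∑ k ∈ range n, extremalSeq N k = extremalPartialSum N n := by
  simp only [extremalSeq]
  rw [sum_range_sub]
  simp [extremalPartialSum]

section Extremal

variable {N n : ℕ}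

lemma extremalSeq_of_lt (h : n < N) : extremalSeq N n = 1 := by
  simp [extremalSeq, extremalPartialSum, h.le, Nat.succ_le_of_lt h]

lemma extremalPartialSum_of_le (hN : 3 ≤ N) (h : N ≤ n) :
    extremalPartialSum N n = extremalScale N / ((n - 1) * (n - 2)) := by
  have hN' : (3 : ℝ) ≤ N := by exact_mod_cast hN
  rcases h.eq_or_lt with rfl | h
  · have : (N : ℝ) - 1 ≠ 0 := by linarith
    have : (N : ℝ) - 2 ≠ 0 := by linarith
    simp only [extremalPartialSum, le_refl, if_true, extremalScale]
    field_simp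
  · simp [extremalPartialSum, Nat.not_le.2 h]

lemma extremalSeq_of_le (hN : 3 ≤ N) (h : N ≤ n) :
    extremalSeq N n = -2 * extremalScale N / (n * (n - 1) * (n - 2)) := by
  have hn : (3 : ℝ) ≤ n := by exact_mod_cast hN.trans h
  rw [extremalSeq, extremalPartialSum_of_le hN h, extremalPartialSum_of_le hN (h.trans n.le_succ)]
  have : (n : ℝ) - 1 ≠ 0 := by linarith
  have : (n : ℝ) - 2 ≠ 0 := by linarith
  have : (n : ℝ) ≠ 0 := by linarith
  rw [show ((n + 1 : ℕ) : ℝ) - 1 = n by push_cast; ring,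
    show ((n + 1 : ℕ) : ℝ) - 2 = n - 1 by push_cast; ring]
  field_simp
  ring

lemma cesaroDefect_extremalSeq_of_le (hN : 3 ≤ N) (h : N ≤ n) :
    cesaroDefect (extremalSeq N) n = 3 * extremalScale N / ((n + 1) * (n - 1) * (n - 2)) := by
  have hn : (3 : ℝ) ≤ n := by exact_mod_cast hN.trans h
  rw [cesaroDefect, sum_range_extremalSeq, extremalPartialSum_of_le hN (h.trans n.le_succ),
    extremalSeq_of_le hN h]
  have : (n : ℝ) - 1 ≠ 0 := by linarith
  have : (n : ℝ) - 2 ≠ 0 := by linarith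
  have : (n : ℝ) ≠ 0 := by linarith
  rw [show ((n + 1 : ℕ) : ℝ) - 1 = n by push_cast; ring,
    show ((n + 1 : ℕ) : ℝ) - 2 = n - 1 by push_cast; ring]
  field_simp
  ring

lemma extremalSeq_pow_four_le (hN : 4 ≤ N) (h : N ≤ n) :
    extremalSeq N n ^ 4
      ≤ 16 * extremalScale N ^ 4 / 11 * (1 / ((n : ℝ) - 3) ^ 11 - 1 / ((n : ℝ) - 3 + 1) ^ 11) := by
  have hn : (4 : ℝ) ≤ n := by exact_mod_cast hN.trans h
  have hbound := le_one_div_pow_sub_one_div_add_one_pow (by linarith : (0 : ℝ) < n - 3) 11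
  rw [show (n : ℝ) - 3 + 1 = n - 2 by ring] at hbound ⊢
  have hcube : ((n : ℝ) - 2) ^ 3 ≤ n * (n - 1) * (n - 2) := by nlinarith
  have hpos : 0 < ((n : ℝ) - 2) ^ 3 := pow_pos (by linarith) 3
  calc extremalSeq N n ^ 4 = 16 * extremalScale N ^ 4 / (n * (n - 1) * (n - 2)) ^ 4 := by
        rw [extremalSeq_of_le (by omega) h, div_pow]; ring
    _ ≤ 16 * extremalScale N ^ 4 / (((n : ℝ) - 2) ^ 3) ^ 4 := by gcongr
    _ = 16 * extremalScale N ^ 4 / 11 * (11 / ((n : ℝ) - 2) ^ 12) := by ring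
    _ ≤ _ := by gcongr; exact_mod_cast hbound

lemma le_cesaroDefect_extremalSeq_pow_four (hN : 3 ≤ N) (h : N ≤ n) :
    81 * extremalScale N ^ 4 / 11 * (1 / ((n : ℝ) + 1) ^ 11 - 1 / ((n : ℝ) + 1 + 1) ^ 11)
      ≤ cesaroDefect (extremalSeq N) n ^ 4 := by
  have hn : (3 : ℝ) ≤ n := by exact_mod_cast hN.trans h
  have hbound := one_div_pow_sub_one_div_add_one_pow_le (by linarith : (0 : ℝ) < n + 1) 11
  have hcube : (n + 1) * ((n : ℝ) - 1) * (n - 2) ≤ (n + 1) ^ 3 := by nlinarith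
  have hpos : 0 < (n + 1) * ((n : ℝ) - 1) * (n - 2) := by
    have : (0 : ℝ) < n - 1 := by linarith
    have : (0 : ℝ) < n - 2 := by linarith
    positivity
  calc 81 * extremalScale N ^ 4 / 11 * (1 / ((n : ℝ) + 1) ^ 11 - 1 / ((n : ℝ) + 1 + 1) ^ 11)
      ≤ 81 * extremalScale N ^ 4 / 11 * (11 / ((n : ℝ) + 1) ^ 12) := by
        gcongr; exact_mod_cast hbound
    _ = 81 * extremalScale N ^ 4 / (((n : ℝ) + 1) ^ 3) ^ 4 := by ring
    _ ≤ 81 * extremalScale N ^ 4 / ((n + 1) * (n - 1) * (n - 2)) ^ 4 := by gcongr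
    _ = cesaroDefect (extremalSeq N) n ^ 4 := by
        rw [cesaroDefect_extremalSeq_of_le hN h, div_pow]; ring

lemma sum_range_extremalSeq_pow_four_tail_le (hN : 4 ≤ N) (K : ℕ) :
    ∑ i ∈ range K, extremalSeq N (i + N) ^ 4 ≤ 16 * extremalScale N ^ 4 / (11 * (N - 3) ^ 11) := by
  have hN' : (4 : ℝ) ≤ N := by exact_mod_cast hN
  have := sum_range_le_of_le_sub_succ
    (g := fun i : ℕ ↦ 16 * extremalScale N ^ 4 / 11 * (1 / ((i : ℝ) + N - 3) ^ 11))
    (fun i ↦ by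
      have : (0 : ℝ) < i + N - 3 := by linarith [i.cast_nonneg (α := ℝ)]
      positivity)
    (fun i ↦ by
      convert extremalSeq_pow_four_le hN (Nat.le_add_left N i) using 3
      push_cast; ring) K
  rwa [Nat.cast_zero, zero_add, mul_one_div, div_div] at this

lemma summable_extremalSeq_pow_four (hN : 4 ≤ N) : Summable fun n ↦ extremalSeq N n ^ 4 :=
  (summable_nat_add_iff N).1 <|
    summable_of_sum_range_le (fun _ ↦ by positivity) (sum_range_extremalSeq_pow_four_tail_le hN)

lemma tsum_extremalSeq_pow_four_le (hN : 4 ≤ N) :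
    ∑' n, extremalSeq N n ^ 4 ≤ N + 16 * extremalScale N ^ 4 / (11 * (N - 3) ^ 11) := by
  rw [← (summable_extremalSeq_pow_four hN).sum_add_tsum_nat_add N]
  have hhead : ∑ i ∈ range N, extremalSeq N i ^ 4 = N := by
    rw [sum_congr rfl fun i hi ↦ by rw [extremalSeq_of_lt (mem_range.1 hi)]]
    simp
  rw [hhead]
  gcongr
  exact Real.tsum_le_of_sum_range_le (fun _ ↦ by positivity)
    (sum_range_extremalSeq_pow_four_tail_le hN)

lemma tsum_extremalSeq_pow_four_pos (hN : 4 ≤ N) : 0 < ∑' n, extremalSeq N n ^ 4 :=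
  (summable_extremalSeq_pow_four hN).tsum_pos (fun _ ↦ by positivity) 0
    (by rw [extremalSeq_of_lt (by omega)]; norm_num)

lemma le_tsum_cesaroDefect_extremalSeq_pow_four (hN : 4 ≤ N) :
    81 * extremalScale N ^ 4 / (11 * (N + 1) ^ 11) ≤ ∑' n, cesaroDefect (extremalSeq N) n ^ 4 := by
  have hs := summable_cesaroDefect_pow_four (summable_extremalSeq_pow_four hN)
  rw [← hs.sum_add_tsum_nat_add N]
  have hhead : 0 ≤ ∑ i ∈ range N, cesaroDefect (extremalSeq N) i ^ 4 :=
    sum_nonneg fun _ _ ↦ by positivity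
  have hlim : Tendsto (fun i : ℕ ↦ ((i : ℝ) + N + 1) ^ 11) atTop atTop :=
    (tendsto_pow_atTop (by norm_num)).comp <| tendsto_atTop_add_const_right _ _ <|
      tendsto_atTop_add_const_right _ _ tendsto_natCast_atTop_atTop
  have := le_tsum_of_sub_succ_le ((summable_nat_add_iff N).2 hs) (fun _ ↦ by positivity)
    (g := fun i : ℕ ↦ 81 * extremalScale N ^ 4 / 11 * (1 / ((i : ℝ) + N + 1) ^ 11))
    (by simpa using hlim.inv_tendsto_atTop.const_mul (81 * extremalScale N ^ 4 / 11))
    (fun i ↦ by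
      convert le_cesaroDefect_extremalSeq_pow_four (by omega) (Nat.le_add_left N i) using 4
      push_cast; ring)
  rw [Nat.cast_zero, zero_add, mul_one_div, div_div] at this
  exact le_add_of_nonneg_of_le hhead this

end Extremal

lemma eventually_extremal_bounds_lt {c : ℝ} (hc : c < 3) :
    ∀ᶠ N : ℕ in atTop, c * (N + 16 * extremalScale N ^ 4 / (11 * (N - 3) ^ 11))
      < 81 * extremalScale N ^ 4 / (11 * (N + 1) ^ 11) := by
  -- `N ^ 23 * Φ (1 / N)` is the difference of the two sides with denominators cleared
  -- (`extremalScale N ≈ N ^ 3`), and `Φ 0 = 81 - 27 c`.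
  set Φ : ℝ → ℝ := fun t ↦ 81 * (1 - t) ^ 4 * (1 - 2 * t) ^ 4 * (1 - 3 * t) ^ 11
    - 11 * c * (1 + t) ^ 11 * (1 - 3 * t) ^ 11
    - 16 * c * (1 - t) ^ 4 * (1 - 2 * t) ^ 4 * (1 + t) ^ 11
  have hΦ : Tendsto (fun N : ℕ ↦ Φ (1 / N)) atTop (𝓝 (Φ 0)) :=
    ((by fun_prop : Continuous Φ).tendsto 0).comp tendsto_one_div_atTop_nhds_zero_nat
  have hΦ0 : 0 < Φ 0 := by norm_num [Φ]; linarith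
  filter_upwards [hΦ.eventually (lt_mem_nhds hΦ0), eventually_ge_atTop 4] with N hpos hN
  have hN' : (4 : ℝ) ≤ N := by exact_mod_cast hN
  have hN3 : (0 : ℝ) < N - 3 := by linarith
  have hid : 81 * extremalScale N ^ 4 / (11 * (N + 1) ^ 11)
        - c * (N + 16 * extremalScale N ^ 4 / (11 * (N - 3) ^ 11))
      = N ^ 23 * Φ (1 / N) / (11 * (N + 1) ^ 11 * (N - 3) ^ 11) := by
    simp only [Φ, extremalScale]
    field_simp
    ring
  have : 0 < N ^ 23 * Φ (1 / N) / (11 * (N + 1) ^ 11 * (N - 3) ^ 11) := by positivity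
  linarith

theorem exists_lt_tsum_cesaroDefect_pow_four {c : ℝ} (hc : c < 3) :
    ∃ a : ℕ → ℝ, Summable (fun n ↦ a n ^ 4) ∧ 0 < ∑' n, a n ^ 4 ∧
      c * ∑' n, a n ^ 4 < ∑' n, cesaroDefect a n ^ 4 := by
  obtain ⟨N, hlt, hN⟩ :=
    ((eventually_extremal_bounds_lt (max_lt hc three_pos)).and (eventually_ge_atTop 4)).exists
  refine ⟨extremalSeq N, summable_extremalSeq_pow_four hN, tsum_extremalSeq_pow_four_pos hN, ?_⟩
  calc c * ∑' n, extremalSeq N n ^ 4 ≤ max c 0 * ∑' n, extremalSeq N n ^ 4 := by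
        gcongr; exact le_max_left c 0
    _ ≤ max c 0 * (N + 16 * extremalScale N ^ 4 / (11 * (N - 3) ^ 11)) :=
        mul_le_mul_of_nonneg_left (tsum_extremalSeq_pow_four_le hN) (le_max_right c 0)
    _ < 81 * extremalScale N ^ 4 / (11 * (N + 1) ^ 11) := hlt
    _ ≤ ∑' n, cesaroDefect (extremalSeq N) n ^ 4 := le_tsum_cesaroDefect_extremalSeq_pow_four hN

/-- The case `p = 4`: the minimum value of `f_4(t) = 4t³ + (1-t)⁴ - t⁴` on `[0, 1/2]`
equals `1/3` (i.e. `m_4 = 1/3`); consequently the operator norm of `C - I` on `ℓ^4`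
equals `3^(1/4)`, i.e. the inequality `∑ |y_n - x_n|⁴ ≤ 3 ∑ |x_n|⁴` holds with
`y_n = (1/n) ∑_{k=1}^n x_k`, and `3` is the least such constant. (Sequences are indexed
so that term `n` of the paper is `x (n+1)` here, `n : ℕ`.) -/
theorem stmt19 :
    IsLeast ((fun t : ℝ => 4 * t ^ 3 + (1 - t) ^ 4 - t ^ 4) '' Set.Icc 0 (1 / 2))
      (1 / 3) ∧
    (∀ x : ℕ → ℝ, (Summable fun n : ℕ => |x (n + 1)| ^ (4 : ℝ)) →
      ∑' n : ℕ,
          |(1 / ((n : ℝ) + 1)) * (∑ k ∈ Finset.range (n + 1), x (k + 1)) - x (n + 1)| ^ (4 : ℝ)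
        ≤ 3 * ∑' n : ℕ, |x (n + 1)| ^ (4 : ℝ)) ∧
    ∀ c : ℝ, c < 3 → ∃ x : ℕ → ℝ,
      (Summable fun n : ℕ => |x (n + 1)| ^ (4 : ℝ)) ∧
      0 < ∑' n : ℕ, |x (n + 1)| ^ (4 : ℝ) ∧
      c * ∑' n : ℕ, |x (n + 1)| ^ (4 : ℝ) <
        ∑' n : ℕ,
          |(1 / ((n : ℝ) + 1)) * (∑ k ∈ Finset.range (n + 1), x (k + 1)) - x (n + 1)| ^ (4 : ℝ) := by
  simp only [abs_rpow_four]
  refine ⟨⟨⟨1 / 3, ⟨by norm_num, by norm_num⟩, by norm_num⟩, ?_⟩,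
    fun x hx ↦ tsum_cesaroDefect_pow_four_le (a := fun n ↦ x (n + 1)) hx, fun c hc ↦ ?_⟩
  · rintro _ ⟨t, -, rfl⟩
    nlinarith [sq_nonneg (t - 1 / 3)]
  · obtain ⟨a, h⟩ := exists_lt_tsum_cesaroDefect_pow_four hc
    exact ⟨fun m ↦ a (m - 1), by simpa [cesaroDefect] using h⟩
end
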